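/- Let k ≥ 4 be even, N > k, and 1 < m ≤ k/2 + 1 with the central vertex adjacent to vertices 1,...,m of C_{N,k}. Then each vertex i ∈ {1,...,m} in D_{N,k,m} has local clustering coefficient (A + m - 1)/C(k+1,2), where A = C(k,2) - kr/2 + r(r-1)/2 and r = min(N-k-1, k/2). -/

import Mathlib

open scoped Classical

/-- Circular distance between two elements of `ZMod N`. -/
def circDist {N : ℕ} (i j : ZMod N) : ℕ := min (i - j).val (j - i).val

/-- The circulant graph `C_{N,k}`: vertices `ZMod N`, `i ~ j` iff the circular
distance between `i` and `j` lies in `{1, ..., k/2}`. -/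
def circulant (N k : ℕ) : SimpleGraph (ZMod N) where
  Adj i j := 1 ≤ circDist i j ∧ circDist i j ≤ k / 2
  symm := by constructor; intro i j h; simpa [circDist, min_comm] using h
  loopless := by constructor; intro i h; simp [circDist] at h

/-- Number of edges among the neighbors of `v`. -/
noncomputable def nbrEdges {V : Type*} [Fintype V] (G : SimpleGraph V) (v : V) : ℕ :=
  (Finset.univ.filter fun p : V × V => G.Adj v p.1 ∧ G.Adj v p.2 ∧ G.Adj p.1 p.2).card / 2

/-- Local clustering coefficient of a vertex. -/
noncomputable def localClustering {V : Type*} [Fintype V] (G : SimpleGraph V) (v : V) : ℚ :=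
  (nbrEdges G v : ℚ) / ((G.degree v).choose 2 : ℚ)

/-- (Average) clustering coefficient of a graph. -/
noncomputable def clusteringCoeff {V : Type*} [Fintype V] (G : SimpleGraph V) : ℚ :=
  (∑ v, localClustering G v) / (Fintype.card V : ℚ)

/-- Add a central vertex (the `none` vertex) adjacent to the set `S` of vertices of `G`. -/
def cone {V : Type*} (G : SimpleGraph V) (S : Set V) : SimpleGraph (Option V) where
  Adj a b :=
    (∃ i j, a = some i ∧ b = some j ∧ G.Adj i j) ∨
    (∃ i ∈ S, (a = none ∧ b = some i) ∨ (b = none ∧ a = some i))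
  symm := by
    constructor
    rintro a b (⟨i, j, rfl, rfl, h⟩ | ⟨i, hi, h⟩)
    · exact Or.inl ⟨j, i, rfl, rfl, h.symm⟩
    · exact Or.inr ⟨i, hi, h.symm⟩
  loopless := by
    constructor
    rintro a (⟨i, j, rfl, h2, h⟩ | ⟨i, hi, ⟨h1, h2⟩ | ⟨h1, h2⟩⟩)
    · cases h2; exact G.loopless.irrefl _ h
    · subst h1; simp at h2
    · subst h1; simp at h2

/-- Type II generalized circulant graph `D_{N,k,m}`: a central vertex joined to
`m` consecutive vertices of the circulant graph `C_{N,k}`. -/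
def typeII (N k m : ℕ) : SimpleGraph (Option (ZMod N)) :=
  cone (circulant N k) {v : ZMod N | v.val < m}

lemma valInt (N : ℕ) [NeZero N] (t : ℤ) (h1 : 0 ≤ t) (h2 : t < N) :
    (((t : ZMod N)).val : ℤ) = t := by
  have := ZMod.val_intCast (n := N) t
  rw [Int.emod_eq_of_lt h1 h2] at this
  exact this

lemma castInj (N : ℕ) [NeZero N] (j1 j2 : ℤ) (hd : |j1 - j2| < N)
    (he : (j1 : ZMod N) = (j2 : ZMod N)) : j1 = j2 := by
  have : ((j1 - j2 : ℤ) : ZMod N) = 0 := by push_cast; rw [he]; ring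
  rw [ZMod.intCast_zmod_eq_zero_iff_dvd] at this
  have := Int.eq_zero_of_abs_lt_dvd this hd
  omega

lemma adj_iff (N k h : ℕ) [NeZero N] (hk : k = 2 * h) (hN : k < N) (v : ZMod N)
    (j1 j2 : ℤ) (h1 : |j1| ≤ (h : ℤ)) (h2 : |j2| ≤ (h : ℤ)) :
    (circulant N k).Adj (v + (j1 : ZMod N)) (v + (j2 : ZMod N)) ↔
      j1 ≠ j2 ∧ (|j1 - j2| ≤ (h : ℤ) ∨ (N : ℤ) - h ≤ |j1 - j2|) := by
  have hNk : (k : ℤ) < N := by exact_mod_cast hN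
  have hk2 : k / 2 = h := by omega
  have e1 : (v + (j1 : ZMod N)) - (v + (j2 : ZMod N)) = ((j1 - j2 : ℤ) : ZMod N) := by
    push_cast; ring
  have e2 : (v + (j2 : ZMod N)) - (v + (j1 : ZMod N)) = ((j2 - j1 : ℤ) : ZMod N) := by
    push_cast; ring
  have key : ∀ t : ℤ, 0 < t → t ≤ 2 * (h:ℤ) →
      ((((t : ℤ) : ZMod N)).val : ℤ) = t ∧ ((((-t : ℤ) : ZMod N)).val : ℤ) = N - t := by
    intro t ht1 ht2
    refine ⟨valInt N t (by omega) (by omega), ?_⟩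
    have : ((-t : ℤ) : ZMod N) = ((N - t : ℤ) : ZMod N) := by push_cast; simp
    rw [this]
    exact valInt N _ (by omega) (by omega)
  rcases lt_trichotomy j1 j2 with hlt | heq | hgt
  · set t : ℤ := j2 - j1 with htdef
    have ht1 : 0 < t := by omega
    have ht2 : t ≤ 2 * (h:ℤ) := by
      rcases abs_cases j1 with ⟨a1, b1⟩ | ⟨a1, b1⟩ <;> rcases abs_cases j2 with ⟨a2, b2⟩ | ⟨a2, b2⟩ <;> omega
    obtain ⟨k1, k2⟩ := key t ht1 ht2
    have habs : |j1 - j2| = t := by rw [abs_sub_comm]; exact abs_of_pos ht1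
    simp only [circulant, circDist]
    rw [e1, e2, habs, show j1 - j2 = -t by omega, hk2]
    constructor
    · rintro ⟨c1, c2⟩
      rw [min_le_iff] at c2
      exact ⟨by omega, by omega⟩
    · rintro ⟨-, c⟩
      refine ⟨by omega, ?_⟩
      rw [min_le_iff]; omega
  · subst heq
    simp only [circulant, circDist]
    simp
  · set t : ℤ := j1 - j2 with htdef
    have ht1 : 0 < t := by omega
    have ht2 : t ≤ 2 * (h:ℤ) := by
      rcases abs_cases j1 with ⟨a1, b1⟩ | ⟨a1, b1⟩ <;> rcases abs_cases j2 with ⟨a2, b2⟩ | ⟨a2, b2⟩ <;> omega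
    obtain ⟨k1, k2⟩ := key t ht1 ht2
    have habs : |j1 - j2| = t := abs_of_pos ht1
    simp only [circulant, circDist]
    rw [e1, e2, habs, show j2 - j1 = -t by omega, hk2]
    constructor
    · rintro ⟨c1, c2⟩
      rw [min_le_iff] at c2
      exact ⟨by omega, by omega⟩
    · rintro ⟨-, c⟩
      refine ⟨by omega, ?_⟩
      rw [min_le_iff]; omega

lemma nbr_iff (N k h : ℕ) [NeZero N] (hk : k = 2 * h) (hN : k < N) (v w : ZMod N) :
    (circulant N k).Adj v w ↔ ∃ j : ℤ, j ≠ 0 ∧ |j| ≤ (h : ℤ) ∧ w = v + (j : ZMod N) := by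
  have hk2 : k / 2 = h := by omega
  constructor
  · intro hadj
    obtain ⟨c1, c2⟩ := hadj
    rw [hk2] at c2
    rcases min_le_iff.mp c2 with hle | hle
    · -- (v - w).val ≤ h, use j = -(v-w).val
      refine ⟨-(((v - w).val : ℤ)), ?_, ?_, ?_⟩
      · have : 1 ≤ (v - w).val := le_trans c1 (min_le_left _ _)
        omega
      · rw [abs_neg, Int.abs_natCast]; exact_mod_cast hle
      · push_cast
        rw [ZMod.natCast_val, ZMod.cast_id]
        ring
    · refine ⟨(((w - v).val : ℤ)), ?_, ?_, ?_⟩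
      · have : 1 ≤ (w - v).val := le_trans c1 (min_le_right _ _)
        omega
      · rw [Int.abs_natCast]; exact_mod_cast hle
      · push_cast
        rw [ZMod.natCast_val, ZMod.cast_id]
        ring
  · rintro ⟨j, hj0, hjh, rfl⟩
    have := (adj_iff N k h hk hN v 0 j (by simp) hjh).mpr
      ⟨by omega, by rw [zero_sub, abs_neg]; left; exact hjh⟩
    simpa using this

lemma typeII_ss (N k m : ℕ) (a b : ZMod N) :
    (typeII N k m).Adj (some a) (some b) ↔ (circulant N k).Adj a b := by
  simp [typeII, cone]

lemma typeII_sn (N k m : ℕ) (a : ZMod N) :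
    (typeII N k m).Adj (some a) none ↔ a.val < m := by
  simp [typeII, cone]

lemma typeII_ns (N k m : ℕ) (b : ZMod N) :
    (typeII N k m).Adj none (some b) ↔ b.val < m := by
  simp [typeII, cone]

lemma typeII_nn (N k m : ℕ) :
    ¬ (typeII N k m).Adj none none := by
  simp [typeII, cone]

lemma card_val_lt (N m : ℕ) [NeZero N] (hm : m ≤ N) :
    (Finset.univ.filter fun w : ZMod N => w.val < m).card = m := by
  have : (Finset.univ.filter fun w : ZMod N => w.val < m)
      = (Finset.range m).image (fun i : ℕ => (i : ZMod N)) := by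
    ext w
    simp only [Finset.mem_filter, Finset.mem_univ, true_and, Finset.mem_image,
      Finset.mem_range]
    constructor
    · intro hw
      exact ⟨w.val, hw, by simp [ZMod.natCast_val, ZMod.cast_id]⟩
    · rintro ⟨i, hi, rfl⟩
      rwa [ZMod.val_cast_of_lt (by omega)]
  rw [this, Finset.card_image_of_injOn, Finset.card_range]
  intro i hi j hj hij
  simp only [Finset.coe_range, Set.mem_Iio] at hi hj
  have h1 : ((i : ZMod N)).val = i := ZMod.val_cast_of_lt (by omega)
  have h2 : ((j : ZMod N)).val = j := ZMod.val_cast_of_lt (by omega)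
  simp only at hij
  rw [← h1, hij, h2]

lemma circ_nbr_eq (N k h : ℕ) [NeZero N] (hk : k = 2 * h) (hN : k < N) (v : ZMod N) :
    (Finset.univ.filter fun w => (circulant N k).Adj v w)
      = ((Finset.Icc (-(h:ℤ)) h).erase 0).image (fun j : ℤ => v + (j : ZMod N)) := by
  ext w
  simp only [Finset.mem_filter, Finset.mem_univ, true_and, Finset.mem_image,
    Finset.mem_erase, Finset.mem_Icc]
  rw [nbr_iff N k h hk hN]
  constructor
  · rintro ⟨j, hj0, hjh, rfl⟩
    exact ⟨j, ⟨hj0, by rcases abs_cases j with ⟨a,b⟩|⟨a,b⟩ <;> omega⟩, rfl⟩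
  · rintro ⟨j, ⟨hj0, hj1, hj2⟩, rfl⟩
    exact ⟨j, hj0, by rcases abs_cases j with ⟨a,b⟩|⟨a,b⟩ <;> omega, rfl⟩

lemma shift_injOn (N k h : ℕ) [NeZero N] (hk : k = 2 * h) (hN : k < N) (v : ZMod N) :
    Set.InjOn (fun j : ℤ => v + (j : ZMod N)) ((Finset.Icc (-(h:ℤ)) h).erase 0) := by
  intro j1 hj1 j2 hj2 he
  simp only [Finset.coe_erase, Set.mem_diff, Finset.coe_Icc, Set.mem_Icc] at hj1 hj2
  have : (j1 : ZMod N) = (j2 : ZMod N) := by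
    have := he
    simpa using add_left_cancel this
  refine castInj N j1 j2 ?_ this
  have : (k : ℤ) < N := by exact_mod_cast hN
  rcases abs_cases (j1 - j2) with ⟨a,b⟩|⟨a,b⟩ <;> omega

lemma circ_nbr_card (N k h : ℕ) [NeZero N] (hk : k = 2 * h) (hN : k < N) (v : ZMod N) :
    (Finset.univ.filter fun w => (circulant N k).Adj v w).card = k := by
  rw [circ_nbr_eq N k h hk hN v, Finset.card_image_of_injOn (shift_injOn N k h hk hN v),
    Finset.card_erase_of_mem (by simp), Int.card_Icc]
  omega

lemma typeII_degree (N k m h : ℕ) [NeZero N] (hk : k = 2 * h) (hN : k < N) (v : ZMod N)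
    (hv : v.val < m) : (typeII N k m).degree (some v) = k + 1 := by
  classical
  rw [SimpleGraph.degree, SimpleGraph.neighborFinset_eq_filter]
  have : (Finset.univ.filter fun w => (typeII N k m).Adj (some v) w)
      = insert none ((Finset.univ.filter fun w => (circulant N k).Adj v w).image some) := by
    ext o
    cases o with
    | none => simp [typeII_sn, hv]
    | some b => simp [typeII_ss]
  rw [this, Finset.card_insert_of_notMem (by simp),
    Finset.card_image_of_injective _ (Option.some_injective _),
    circ_nbr_card N k h hk hN v]

lemma adj_shift (N k h : ℕ) [NeZero N] (hk : k = 2 * h) (hN : k < N) (v : ZMod N)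
    (j : ℤ) (hj0 : j ≠ 0) (hjh : |j| ≤ (h:ℤ)) : (circulant N k).Adj v (v + (j : ZMod N)) := by
  rw [nbr_iff N k h hk hN]
  exact ⟨j, hj0, hjh, rfl⟩

lemma W_card (N k m h : ℕ) [NeZero N] (hk : k = 2 * h) (hN : k < N)
    (hm1 : 1 < m) (hm2 : m ≤ h + 1) (v : ZMod N) (hv : v.val < m) :
    (Finset.univ.filter fun w : ZMod N => (circulant N k).Adj v w ∧ w.val < m).card = m - 1 := by
  have hmN : m ≤ N := by omega
  have heq : (Finset.univ.filter fun w : ZMod N => (circulant N k).Adj v w ∧ w.val < m)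
      = (Finset.univ.filter fun w : ZMod N => w.val < m).erase v := by
    ext w
    simp only [Finset.mem_filter, Finset.mem_univ, true_and, Finset.mem_erase]
    constructor
    · rintro ⟨hadj, hwm⟩
      exact ⟨hadj.ne', hwm⟩
    · rintro ⟨hne, hwm⟩
      refine ⟨?_, hwm⟩
      have hwv : w = v + (((w.val : ℤ) - (v.val : ℤ) : ℤ) : ZMod N) := by
        push_cast
        rw [ZMod.natCast_val, ZMod.cast_id, ZMod.natCast_val, ZMod.cast_id]
        ring
      rw [hwv]
      apply adj_shift N k h hk hN
      · intro hc
        apply hne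
        have : (w.val : ℤ) = v.val := by omega
        have : w.val = v.val := by omega
        exact ZMod.val_injective N this
      · rcases abs_cases ((w.val : ℤ) - v.val) with ⟨a,b⟩|⟨a,b⟩ <;> omega
  rw [heq, Finset.card_erase_of_mem (by simp [hv]), card_val_lt N m hmN]

lemma Ecc_card (N k h : ℕ) [NeZero N] (hk : k = 2 * h) (hN : k < N) (v : ZMod N) :
    ((Finset.univ ×ˢ Finset.univ).filter fun q : ZMod N × ZMod N =>
        (circulant N k).Adj v q.1 ∧ (circulant N k).Adj v q.2 ∧ (circulant N k).Adj q.1 q.2).card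
      = ((((Finset.Icc (-(h:ℤ)) h).erase 0) ×ˢ ((Finset.Icc (-(h:ℤ)) h).erase 0)).filter
          fun q : ℤ × ℤ => q.1 ≠ q.2 ∧ (|q.1 - q.2| ≤ (h:ℤ) ∨ (N:ℤ) - h ≤ |q.1 - q.2|)).card := by
  have hNk : (k : ℤ) < N := by exact_mod_cast hN
  refine (Finset.card_bij (fun q _ => ((v + (q.1 : ZMod N), v + (q.2 : ZMod N)) : ZMod N × ZMod N))
    ?_ ?_ ?_).symm
  · rintro ⟨j1, j2⟩ hq
    simp only [Finset.mem_filter, Finset.mem_product, Finset.mem_erase, Finset.mem_Icc] at hq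
    obtain ⟨⟨⟨h10, h1a, h1b⟩, ⟨h20, h2a, h2b⟩⟩, hne, hcond⟩ := hq
    have a1 : |j1| ≤ (h:ℤ) := by rcases abs_cases j1 with ⟨a,b⟩|⟨a,b⟩ <;> omega
    have a2 : |j2| ≤ (h:ℤ) := by rcases abs_cases j2 with ⟨a,b⟩|⟨a,b⟩ <;> omega
    simp only [Finset.mem_filter, Finset.mem_product, Finset.mem_univ, true_and]
    exact ⟨adj_shift N k h hk hN v j1 h10 a1, adj_shift N k h hk hN v j2 h20 a2,
      (adj_iff N k h hk hN v j1 j2 a1 a2).mpr ⟨hne, hcond⟩⟩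
  · rintro ⟨j1, j2⟩ hq ⟨j1', j2'⟩ hq' he
    simp only [Finset.mem_filter, Finset.mem_product, Finset.mem_erase, Finset.mem_Icc] at hq hq'
    obtain ⟨⟨⟨h10, h1a, h1b⟩, ⟨h20, h2a, h2b⟩⟩, -⟩ := hq
    obtain ⟨⟨⟨h10', h1a', h1b'⟩, ⟨h20', h2a', h2b'⟩⟩, -⟩ := hq'
    obtain ⟨e1, e2⟩ := Prod.mk.injEq .. ▸ he
    have e1' : (j1 : ZMod N) = (j1' : ZMod N) := by
      simpa using congrArg (fun x => x - v) e1
    have e2' : (j2 : ZMod N) = (j2' : ZMod N) := by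
      simpa using congrArg (fun x => x - v) e2
    have := castInj N j1 j1' (by rcases abs_cases (j1 - j1') with ⟨a,b⟩|⟨a,b⟩ <;> omega) e1'
    have := castInj N j2 j2' (by rcases abs_cases (j2 - j2') with ⟨a,b⟩|⟨a,b⟩ <;> omega) e2'
    simp_all
  · rintro ⟨w1, w2⟩ hw
    simp only [Finset.mem_filter, Finset.mem_product, Finset.mem_univ, true_and] at hw
    obtain ⟨a1, a2, a12⟩ := hw
    obtain ⟨j1, hj10, hj1h, rfl⟩ := (nbr_iff N k h hk hN v w1).mp a1
    obtain ⟨j2, hj20, hj2h, rfl⟩ := (nbr_iff N k h hk hN v w2).mp a2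
    obtain ⟨hne, hcond⟩ := (adj_iff N k h hk hN v j1 j2 hj1h hj2h).mp a12
    refine ⟨⟨j1, j2⟩, ?_, rfl⟩
    simp only [Finset.mem_filter, Finset.mem_product, Finset.mem_erase, Finset.mem_Icc]
    refine ⟨⟨⟨hj10, ?_, ?_⟩, ⟨hj20, ?_, ?_⟩⟩, hne, hcond⟩ <;>
      [rcases abs_cases j1 with ⟨a,b⟩|⟨a,b⟩; rcases abs_cases j1 with ⟨a,b⟩|⟨a,b⟩;
       rcases abs_cases j2 with ⟨a,b⟩|⟨a,b⟩; rcases abs_cases j2 with ⟨a,b⟩|⟨a,b⟩] <;> omega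

lemma F_card (N k m h : ℕ) [NeZero N] (hk : k = 2 * h) (hN : k < N)
    (hm1 : 1 < m) (hm2 : m ≤ h + 1) (v : ZMod N) (hv : v.val < m) :
    (Finset.univ.filter fun p : Option (ZMod N) × Option (ZMod N) =>
        (typeII N k m).Adj (some v) p.1 ∧ (typeII N k m).Adj (some v) p.2 ∧
          (typeII N k m).Adj p.1 p.2).card
      = ((((Finset.Icc (-(h:ℤ)) h).erase 0) ×ˢ ((Finset.Icc (-(h:ℤ)) h).erase 0)).filter
          fun q : ℤ × ℤ => q.1 ≠ q.2 ∧ (|q.1 - q.2| ≤ (h:ℤ) ∨ (N:ℤ) - h ≤ |q.1 - q.2|)).card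
        + 2 * (m - 1) := by
  classical
  set Wf := Finset.univ.filter fun w : ZMod N => (circulant N k).Adj v w ∧ w.val < m with hWf
  set Ec := (Finset.univ ×ˢ Finset.univ).filter fun q : ZMod N × ZMod N =>
      (circulant N k).Adj v q.1 ∧ (circulant N k).Adj v q.2 ∧ (circulant N k).Adj q.1 q.2 with hEc
  set F1 := Ec.image (fun q : ZMod N × ZMod N => ((some q.1, some q.2) :
      Option (ZMod N) × Option (ZMod N))) with hF1
  set F2 := Wf.image (fun w : ZMod N => ((none, some w) : Option (ZMod N) × Option (ZMod N)))
    with hF2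
  set F3 := Wf.image (fun w : ZMod N => ((some w, none) : Option (ZMod N) × Option (ZMod N)))
    with hF3
  have hsplit : (Finset.univ.filter fun p : Option (ZMod N) × Option (ZMod N) =>
      (typeII N k m).Adj (some v) p.1 ∧ (typeII N k m).Adj (some v) p.2 ∧
        (typeII N k m).Adj p.1 p.2) = F1 ∪ (F2 ∪ F3) := by
    ext ⟨a, b⟩
    cases a <;> cases b <;>
      simp [hF1, hF2, hF3, hWf, hEc, typeII_ss, typeII_sn, typeII_ns, typeII_nn, hv,
        Finset.mem_union, Finset.mem_image, Finset.mem_filter] <;>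
      aesop
  rw [hsplit]
  have hd1 : Disjoint F1 (F2 ∪ F3) := by
    simp only [Finset.disjoint_union_right]
    constructor <;> (rw [Finset.disjoint_left]; rintro ⟨a, b⟩ hab hcd) <;>
      simp only [hF1, hF2, hF3, Finset.mem_image] at hab hcd <;> aesop
  have hd2 : Disjoint F2 F3 := by
    rw [Finset.disjoint_left]; rintro ⟨a, b⟩ hab hcd
    simp only [hF2, hF3, Finset.mem_image] at hab hcd; aesop
  rw [Finset.card_union_of_disjoint hd1, Finset.card_union_of_disjoint hd2]
  have c1 : F1.card = Ec.card :=
    Finset.card_image_of_injective _ (fun a b hab => by simpa [Prod.ext_iff] using hab)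
  have c2 : F2.card = Wf.card :=
    Finset.card_image_of_injective _ (fun a b hab => by simpa using hab)
  have c3 : F3.card = Wf.card :=
    Finset.card_image_of_injective _ (fun a b hab => by simpa using hab)
  rw [c1, c2, c3, hWf, W_card N k m h hk hN hm1 hm2 v hv, hEc, Ecc_card N k h hk hN v]
  ring

lemma fiber_pos (N h : ℕ) [NeZero N] (t : ℤ) (hh2 : 2 ≤ h) (ht1 : (h:ℤ)+1 ≤ t)
    (ht2 : t ≤ (N:ℤ) - h - 1) (ht3 : t ≤ 2*h) :
    (((((Finset.Icc (-(h:ℤ)) h).erase 0) ×ˢ ((Finset.Icc (-(h:ℤ)) h).erase 0)).filter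
        fun q : ℤ × ℤ => (h:ℤ) < |q.1 - q.2| ∧ |q.1 - q.2| < (N:ℤ) - h).filter
        (fun q => q.1 - q.2 = t))
      = (Finset.Icc (-(h:ℤ)) ((h:ℤ) - t)).image (fun j => (j + t, j)) := by
  ext ⟨a, b⟩
  simp only [Finset.mem_filter, Finset.mem_product, Finset.mem_erase, Finset.mem_Icc,
    Finset.mem_image, Prod.mk.injEq]
  constructor
  · rintro ⟨⟨⟨⟨ha0, ha1, ha2⟩, ⟨hb0, hb1, hb2⟩⟩, hc1, hc2⟩, hab⟩
    exact ⟨b, ⟨hb1, by omega⟩, by omega, rfl⟩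
  · rintro ⟨j, ⟨hj1, hj2⟩, rfl, rfl⟩
    have habs : |j + t - j| = t := by rw [show j + t - j = t by ring]; exact abs_of_pos (by omega)
    refine ⟨⟨⟨⟨by omega, by omega, by omega⟩, ⟨by omega, hj1, by omega⟩⟩, ?_, ?_⟩, by ring⟩
    · rw [habs]; omega
    · rw [habs]; omega

lemma fiber_neg (N h : ℕ) [NeZero N] (t : ℤ) (hh2 : 2 ≤ h) (ht1 : t ≤ -(h:ℤ)-1)
    (ht2 : -((N:ℤ) - h - 1) ≤ t) (ht3 : -(2*(h:ℤ)) ≤ t) :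
    (((((Finset.Icc (-(h:ℤ)) h).erase 0) ×ˢ ((Finset.Icc (-(h:ℤ)) h).erase 0)).filter
        fun q : ℤ × ℤ => (h:ℤ) < |q.1 - q.2| ∧ |q.1 - q.2| < (N:ℤ) - h).filter
        (fun q => q.1 - q.2 = t))
      = (Finset.Icc (-(h:ℤ) - t) (h:ℤ)).image (fun j => (j + t, j)) := by
  ext ⟨a, b⟩
  simp only [Finset.mem_filter, Finset.mem_product, Finset.mem_erase, Finset.mem_Icc,
    Finset.mem_image, Prod.mk.injEq]
  constructor
  · rintro ⟨⟨⟨⟨ha0, ha1, ha2⟩, ⟨hb0, hb1, hb2⟩⟩, hc1, hc2⟩, hab⟩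
    exact ⟨b, ⟨by omega, hb2⟩, by omega, rfl⟩
  · rintro ⟨j, ⟨hj1, hj2⟩, rfl, rfl⟩
    have habs : |j + t - j| = -t := by
      rw [show j + t - j = t by ring]; exact abs_of_neg (by omega)
    refine ⟨⟨⟨⟨by omega, by omega, by omega⟩, ⟨by omega, by omega, hj2⟩⟩, ?_, ?_⟩, by ring⟩
    · rw [habs]; omega
    · rw [habs]; omega

lemma Q_card (N k h r : ℕ) [NeZero N] (hk : k = 2 * h) (hh2 : 2 ≤ h) (hN : k < N)
    (hr1 : r ≤ h) (hr2 : (r:ℤ) ≤ (N:ℤ) - 2*h - 1) (hr3 : (r:ℤ) = h ∨ (r:ℤ) = (N:ℤ) - 2*h - 1) :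
    ((((Finset.Icc (-(h:ℤ)) h).erase 0) ×ˢ ((Finset.Icc (-(h:ℤ)) h).erase 0)).filter
        fun q : ℤ × ℤ => (h:ℤ) < |q.1 - q.2| ∧ |q.1 - q.2| < (N:ℤ) - h).card
      = 2 * ∑ s ∈ Finset.range r, (h - s) := by
  have hNk : (k:ℤ) < N := by exact_mod_cast hN
  set J := (Finset.Icc (-(h:ℤ)) h).erase 0 with hJ
  set Q := ((J ×ˢ J).filter
      fun q : ℤ × ℤ => (h:ℤ) < |q.1 - q.2| ∧ |q.1 - q.2| < (N:ℤ) - h) with hQ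
  set Tp := Finset.Icc ((h:ℤ)+1) ((h:ℤ)+r) with hTp
  set Tn := Finset.Icc (-(h:ℤ)-r) (-(h:ℤ)-1) with hTn
  have hdisj : Disjoint Tp Tn := by
    rw [Finset.disjoint_left]
    intro t htp htn
    rw [hTp, Finset.mem_Icc] at htp
    rw [hTn, Finset.mem_Icc] at htn
    omega
  have hmem : ∀ q ∈ Q, q.1 - q.2 ∈ Tp ∪ Tn := by
    rintro ⟨a, b⟩ hq
    rw [hQ, Finset.mem_filter] at hq
    obtain ⟨hab, hc1, hc2⟩ := hq
    rw [Finset.mem_product, hJ, Finset.mem_erase, Finset.mem_Icc,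
      Finset.mem_erase, Finset.mem_Icc] at hab
    dsimp only at hc1 hc2
    rw [Finset.mem_union, hTp, hTn, Finset.mem_Icc, Finset.mem_Icc]
    rcases abs_cases (a - b) with ⟨e1, e2⟩ | ⟨e1, e2⟩ <;> omega
  have hfib := Finset.card_eq_sum_card_fiberwise hmem
  rw [hfib, Finset.sum_union hdisj]
  have hpos : ∑ t ∈ Tp, (Q.filter fun q => q.1 - q.2 = t).card
      = ∑ s ∈ Finset.range r, (h - s) := by
    have himg : Tp = (Finset.range r).image (fun s : ℕ => (h:ℤ)+1+s) := by
      ext t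
      simp only [hTp, Finset.mem_Icc, Finset.mem_image, Finset.mem_range]
      constructor
      · intro ⟨c1, c2⟩
        exact ⟨(t - h - 1).toNat, by omega, by omega⟩
      · rintro ⟨s, hs, rfl⟩
        omega
    rw [himg, Finset.sum_image (by intro a _ b _ he; simp only at he; omega)]
    apply Finset.sum_congr rfl
    intro s hs
    rw [Finset.mem_range] at hs
    rw [hQ, fiber_pos N h ((h:ℤ)+1+s) hh2 (by omega) (by omega) (by omega),
      Finset.card_image_of_injective _ (fun a b he => by simpa using he), Int.card_Icc]
    omega
  have hneg : ∑ t ∈ Tn, (Q.filter fun q => q.1 - q.2 = t).card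
      = ∑ s ∈ Finset.range r, (h - s) := by
    have himg : Tn = (Finset.range r).image (fun s : ℕ => -(h:ℤ)-1-s) := by
      ext t
      simp only [hTn, Finset.mem_Icc, Finset.mem_image, Finset.mem_range]
      constructor
      · intro ⟨c1, c2⟩
        exact ⟨(-t - h - 1).toNat, by omega, by omega⟩
      · rintro ⟨s, hs, rfl⟩
        omega
    rw [himg, Finset.sum_image (by intro a _ b _ he; simp only at he; omega)]
    apply Finset.sum_congr rfl
    intro s hs
    rw [Finset.mem_range] at hs
    rw [hQ, fiber_neg N h (-(h:ℤ)-1-s) hh2 (by omega) (by omega) (by omega),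
      Finset.card_image_of_injective _ (fun a b he => by simpa using he), Int.card_Icc]
    omega
  rw [hpos, hneg]
  ring

lemma P_card (N k h r : ℕ) [NeZero N] (hk : k = 2 * h) (hh2 : 2 ≤ h) (hN : k < N)
    (hr1 : r ≤ h) (hr2 : (r:ℤ) ≤ (N:ℤ) - 2*h - 1) (hr3 : (r:ℤ) = h ∨ (r:ℤ) = (N:ℤ) - 2*h - 1) :
    ((((Finset.Icc (-(h:ℤ)) h).erase 0) ×ˢ ((Finset.Icc (-(h:ℤ)) h).erase 0)).filter
        fun q : ℤ × ℤ => q.1 ≠ q.2 ∧ (|q.1 - q.2| ≤ (h:ℤ) ∨ (N:ℤ) - h ≤ |q.1 - q.2|)).card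
      + 2 * (∑ s ∈ Finset.range r, (h - s)) + 2 * h = 2 * h * (2 * h) := by
  classical
  set J := (Finset.Icc (-(h:ℤ)) h).erase 0 with hJ
  have hJcard : J.card = 2 * h := by
    rw [hJ, Finset.card_erase_of_mem (by rw [Finset.mem_Icc]; omega), Int.card_Icc]
    omega
  have key : 2 * h * (2 * h) = (J ×ˢ J).card := by
    rw [Finset.card_product, hJcard]
  rw [key]
  have split1 := Finset.card_filter_add_card_filter_not
    (s := J ×ˢ J) (p := fun q : ℤ × ℤ => q.1 = q.2)
  have hdiag : ((J ×ˢ J).filter fun q : ℤ × ℤ => q.1 = q.2).card = 2 * h := by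
    have : ((J ×ˢ J).filter fun q : ℤ × ℤ => q.1 = q.2) = J.image (fun j => (j, j)) := by
      ext ⟨a, b⟩
      simp only [Finset.mem_filter, Finset.mem_product, Finset.mem_image, Prod.mk.injEq]
      constructor
      · rintro ⟨⟨h1, h2⟩, rfl⟩; exact ⟨a, h1, rfl, rfl⟩
      · rintro ⟨j, hj, rfl, rfl⟩; exact ⟨⟨hj, hj⟩, rfl⟩
    rw [this, Finset.card_image_of_injective _ (fun a b he => by simpa using he), hJcard]
  set NE := (J ×ˢ J).filter (fun q : ℤ × ℤ => ¬ q.1 = q.2) with hNE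
  have split2 := Finset.card_filter_add_card_filter_not
    (s := NE) (p := fun q : ℤ × ℤ => |q.1 - q.2| ≤ (h:ℤ) ∨ (N:ℤ) - h ≤ |q.1 - q.2|)
  have ePf : NE.filter (fun q : ℤ × ℤ => |q.1 - q.2| ≤ (h:ℤ) ∨ (N:ℤ) - h ≤ |q.1 - q.2|)
      = (J ×ˢ J).filter
        (fun q : ℤ × ℤ => q.1 ≠ q.2 ∧ (|q.1 - q.2| ≤ (h:ℤ) ∨ (N:ℤ) - h ≤ |q.1 - q.2|)) := by
    rw [hNE, Finset.filter_filter]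
  have eQf : NE.filter
      (fun q : ℤ × ℤ => ¬ (|q.1 - q.2| ≤ (h:ℤ) ∨ (N:ℤ) - h ≤ |q.1 - q.2|))
      = (J ×ˢ J).filter
        (fun q : ℤ × ℤ => (h:ℤ) < |q.1 - q.2| ∧ |q.1 - q.2| < (N:ℤ) - h) := by
    rw [hNE, Finset.filter_filter]
    apply Finset.filter_congr
    rintro ⟨a, b⟩ _
    dsimp only
    constructor
    · rintro ⟨hne, hc⟩
      push_neg at hc
      exact hc
    · rintro ⟨c1, c2⟩
      have : a ≠ b := by
        intro he
        rw [he, sub_self, abs_zero] at c1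
        omega
      refine ⟨this, ?_⟩
      push_neg
      exact ⟨c1, c2⟩
  rw [ePf] at split2
  rw [eQf, Q_card N k h r hk hh2 hN hr1 hr2 hr3] at split2
  omega

lemma sum_cast_q (h : ℕ) : ∀ r : ℕ, r ≤ h →
    ((∑ s ∈ Finset.range r, (h - s) : ℕ) : ℚ) = r * h - r * (r - 1) / 2 := by
  intro r
  induction r with
  | zero => simp
  | succ n ih =>
    intro hn
    rw [Finset.sum_range_succ, Nat.cast_add, ih (by omega), Nat.cast_sub (by omega)]
    push_cast
    ring

lemma choose_two_even (h : ℕ) : (2 * h).choose 2 = h * (2 * h - 1) := by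
  rcases Nat.eq_zero_or_pos h with rfl | hp
  · simp
  obtain ⟨c, hc⟩ : ∃ c, 2 * h = c + 1 := ⟨2 * h - 1, by omega⟩
  rw [Nat.choose_two_right, hc, show c + 1 - 1 = c by omega, ← hc, mul_assoc,
    Nat.mul_div_cancel_left _ (by norm_num)]

theorem stmt11 (N k m : ℕ) [NeZero N] (hke : Even k) (hk4 : 4 ≤ k) (hN : k < N)
    (hm1 : 1 < m) (hm2 : m ≤ k / 2 + 1)
    (r : ℕ) (hr : r = min (N - k - 1) (k / 2))
    (A : ℚ) (hA : A = (k.choose 2 : ℚ) - k * r / 2 + r * (r - 1) / 2) :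
    ∀ v : ZMod N, v.val < m →
      localClustering (typeII N k m) (some v) = (A + m - 1) / ((k + 1).choose 2 : ℚ) := by
  intro v hv
  obtain ⟨h, hh⟩ := hke
  have hk : k = 2 * h := by omega
  have hh2 : 2 ≤ h := by omega
  have hm2' : m ≤ h + 1 := by omega
  have hr1 : r ≤ h := by omega
  have hr2 : (r:ℤ) ≤ (N:ℤ) - 2*h - 1 := by omega
  have hr3 : (r:ℤ) = h ∨ (r:ℤ) = (N:ℤ) - 2*h - 1 := by omega
  set S := ∑ s ∈ Finset.range r, (h - s) with hS
  have hP := P_card N k h r hk hh2 hN hr1 hr2 hr3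
  have hF := F_card N k m h hk hN hm1 hm2' v hv
  rw [← hS] at hP
  have hSle : S ≤ h * h := by
    calc S ≤ ∑ _s ∈ Finset.range r, h := Finset.sum_le_sum (fun i _ => Nat.sub_le h i)
    _ = r * h := by rw [Finset.sum_const, Finset.card_range, smul_eq_mul]
    _ ≤ h * h := Nat.mul_le_mul_right h hr1
  have hhu : h ≤ h * h := Nat.le_mul_of_pos_left h (by omega)
  set u := h * h with hu
  have e4 : 2 * h * (2 * h) = 4 * u := by rw [hu]; ring
  rw [e4] at hP
  simp only [localClustering, nbrEdges]
  rw [typeII_degree N k m h hk hN v hv, hF]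
  have hnb : (((((Finset.Icc (-(h:ℤ)) h).erase 0) ×ˢ ((Finset.Icc (-(h:ℤ)) h).erase 0)).filter
          fun q : ℤ × ℤ => q.1 ≠ q.2 ∧ (|q.1 - q.2| ≤ (h:ℤ) ∨ (N:ℤ) - h ≤ |q.1 - q.2|)).card
        + 2 * (m - 1)) / 2 = 2*u - h - S + (m - 1) := by omega
  rw [hnb]
  congr 1
  -- now show cast equality
  have hcastX : ((2*u - h - S + (m - 1) : ℕ) : ℚ) + S + h + 1 = 2*u + m := by
    have : (2*u - h - S + (m - 1)) + S + h + 1 = 2*u + m := by omega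
    exact_mod_cast congrArg (Nat.cast : ℕ → ℚ) this
  have hSq : (S:ℚ) = r * h - r * (r-1) / 2 := sum_cast_q h r hr1
  have huq : ((u:ℕ):ℚ) = (h:ℚ) * h := by rw [hu]; push_cast; ring
  have hkq : ((k:ℕ):ℚ) = 2 * (h:ℚ) := by rw [hk]; push_cast; ring
  have hc2n : k.choose 2 = h * (2*h - 1) := by rw [hk, choose_two_even]
  have hc2 : ((k.choose 2 : ℕ) : ℚ) = 2*(h:ℚ)*h - h := by
    rw [hc2n, Nat.cast_mul, Nat.cast_sub (by omega)]
    push_cast; ring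
  rw [hA, hc2, hkq]
  push_cast at hcastX ⊢
  linarith [hcastX, hSq, huq]
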